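/- Let b : ℝⁿ → ℝ be twice continuously differentiable along trajectories of ż = f(z) + g(z)u, and suppose along a trajectory z(t) the higher-order CBF inequality L_f²b + L_g L_f b·u + (p₁ + p₂)L_f b + p₁p₂·b ≥ 0 holds for all t, where p₁, p₂ > 0 are constants. If b(z(0)) ≥ 0 and L_f b(z(0)) + p₁ b(z(0)) ≥ 0, then b(z(t)) ≥ 0 for all t ≥ 0. -/

import Mathlib

lemma hocbf_aux (φ : ℝ → ℝ) (p : ℝ) (hφ : Differentiable ℝ φ)
    (h0 : 0 ≤ φ 0) (h : ∀ t ≥ (0:ℝ), 0 ≤ deriv φ t + p * φ t) :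
    ∀ t ≥ (0:ℝ), 0 ≤ φ t := by
  intro t ht
  set g := fun s => Real.exp (p * s) * φ s with hg_def
  have hg : ∀ s, HasDerivAt g (Real.exp (p * s) * (deriv φ s + p * φ s)) s := by
    intro s
    have h1 : HasDerivAt (fun s => Real.exp (p * s)) (p * Real.exp (p * s)) s := by
      simpa [mul_comm, Function.comp_def] using (Real.hasDerivAt_exp (p * s)).comp s
        ((hasDerivAt_id s).const_mul p)
    have : HasDerivAt (fun y => Real.exp (p * y) * φ y)
        (p * Real.exp (p * s) * φ s + Real.exp (p * s) * deriv φ s) s := h1.mul (hφ s).hasDerivAt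
    convert this using 1
    ring
  have hmono : MonotoneOn g (Set.Ici 0) := by
    apply monotoneOn_of_deriv_nonneg (convex_Ici 0)
    · exact fun x _ => (hg x).continuousAt.continuousWithinAt
    · exact fun x _ => (hg x).differentiableAt.differentiableWithinAt
    · intro x hx
      rw [(hg x).deriv]
      have hx0 : (0:ℝ) ≤ x := le_of_lt (by simpa using hx)
      exact mul_nonneg (Real.exp_pos _).le (h x hx0)
  have hgt := hmono Set.self_mem_Ici ht ht
  have hg0 : g 0 = φ 0 := by simp [hg_def]
  have hgtnn : 0 ≤ g t := le_trans (by rw [hg0]; exact h0) hgt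
  have hexp : 0 < Real.exp (p * t) := Real.exp_pos _
  simp only [hg_def] at hgtnn
  nlinarith [hgtnn, hexp]

/-- Higher-order CBF invariance (relative degree 2): along a trajectory `z(t)`
of `ż = f(z) + g(z)u`, with `B = b ∘ z` twice continuously differentiable, the
HOCBF inequality `B̈ + (p₁+p₂)Ḃ + p₁p₂B ≥ 0` (which along the trajectory is
`L_f²b + L_gL_fb·u + (p₁+p₂)L_fb + p₁p₂b ≥ 0`), together with `B(0) ≥ 0` and
`Ḃ(0) + p₁B(0) ≥ 0`, implies `b(z(t)) ≥ 0` for all `t ≥ 0`. -/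
theorem hocbf_invariance
    (n : ℕ) (b : (Fin n → ℝ) → ℝ) (z : ℝ → (Fin n → ℝ)) (p₁ p₂ : ℝ)
    (hp₁ : 0 < p₁) (hp₂ : 0 < p₂)
    (hB : ContDiff ℝ 2 (fun t => b (z t)))
    (hineq : ∀ t ≥ (0 : ℝ),
        deriv (deriv (fun s => b (z s))) t +
          (p₁ + p₂) * deriv (fun s => b (z s)) t +
          p₁ * p₂ * b (z t) ≥ 0)
    (h0 : b (z 0) ≥ 0)
    (h0' : deriv (fun s => b (z s)) 0 + p₁ * b (z 0) ≥ 0) :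
    ∀ t ≥ (0 : ℝ), b (z t) ≥ 0 := by
  set B := fun s => b (z s) with hBdef
  have hB' : ContDiff ℝ ((1:WithTop ℕ∞) + 1) B := by
    have : ((1:WithTop ℕ∞) + 1) = 2 := by norm_num
    rw [this]; exact hB
  have hsp := contDiff_succ_iff_deriv.mp hB'
  have hBdiff : Differentiable ℝ B := hsp.1
  have hB'diff : Differentiable ℝ (deriv B) := hsp.2.2.differentiable one_ne_zero
  set ψ := fun s => deriv B s + p₁ * B s with hψdef
  have hψdiff : Differentiable ℝ ψ := hB'diff.add (hBdiff.const_mul p₁)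
  have hψderiv : ∀ s, deriv ψ s = deriv (deriv B) s + p₁ * deriv B s := by
    intro s
    have := ((hB'diff s).hasDerivAt.add (((hBdiff s).hasDerivAt).const_mul p₁)).deriv
    exact this
  have hψ0 : 0 ≤ ψ 0 := h0'
  have hψpos : ∀ t ≥ (0:ℝ), 0 ≤ ψ t := by
    apply hocbf_aux ψ p₂ hψdiff hψ0
    intro t ht
    rw [hψderiv t, hψdef]
    have := hineq t ht
    simp only [hBdef] at this ⊢
    nlinarith [this]
  intro t ht
  apply hocbf_aux B p₁ hBdiff h0 _ t ht
  intro s hs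
  exact hψpos s hs
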